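/- arXiv:1908.06721 — 6 statements merged into one kernel-verified Lean document; each statement's English description precedes it below -/
import Mathlib

section
/- Let T be a bounded self-adjoint operator on ℓ²(ℕ;ℂ), let x ∈ ℓ²(ℕ;ℂ), let f : ℕ → ℕ satisfy f(n) > n for all n, and let C₁, C₂ ≥ 0 and nonnegative real sequences (α_n), (β_n) be such that ‖(I − P_{f(n)}) T P_n‖ ≤ C₁ α_n for all n and ‖P_m x − x‖ ≤ C₂ β_m for all m. Then for every z ∈ ℂ \ σ(T), every n ∈ ℕ, and every y ∈ ℓ²(ℕ;ℂ) with P_n y = y, one has ‖y − R(z,T)x‖ ≤ (C₂ β_{f(n)} + C₁ α_n ‖y‖ + ‖P_{f(n)}(T − zI)y − P_{f(n)}x‖) / dist(z, σ(T)). -/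
open MeasureTheory Filter Topology
open scoped Pointwise

noncomputable section

/-- The Hilbert space `ℓ²(ℕ;ℂ)` of square-summable complex sequences. -/
abbrev ℓ2 : Type := lp (fun _ : ℕ => ℂ) 2

/-- The canonical basis vectors `e_j`. -/
def eVec (j : ℕ) : ℓ2 := lp.single 2 j 1

/-- The span of the first `n` canonical basis vectors. -/
def spanFirst (n : ℕ) : Submodule ℂ ℓ2 := Submodule.span ℂ (eVec '' Set.Iio n)

instance (n : ℕ) : FiniteDimensional ℂ (spanFirst n) :=
  FiniteDimensional.span_of_finite ℂ ((Set.finite_Iio n).image eVec)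

/-- `Pn n` is the orthogonal projection onto the span of the first `n` basis vectors. -/
def Pn (n : ℕ) : ℓ2 →L[ℂ] ℓ2 :=
  (spanFirst n).subtypeL.comp (Submodule.orthogonalProjection (spanFirst n))

lemma Pn_eq_self {m : ℕ} {w : ℓ2} (hw : w ∈ spanFirst m) : Pn m w = w := by
  exact (Submodule.starProjection_eq_self_iff (K := spanFirst m)).2 hw

lemma mem_of_Pn_eq_self {m : ℕ} {w : ℓ2} (hw : Pn m w = w) : w ∈ spanFirst m := by
  rw [← hw]; exact SetLike.coe_mem (Submodule.orthogonalProjection (spanFirst m) w)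

lemma spanFirst_mono {n m : ℕ} (h : n ≤ m) : spanFirst n ≤ spanFirst m :=
  Submodule.span_mono (Set.image_mono (Set.Iio_subset_Iio h))

instance : Nontrivial ℓ2 := by
  refine ⟨0, eVec 0, fun h => ?_⟩
  have := congrArg (fun v : ℓ2 => (v : ℕ → ℂ) 0) h
  simp [eVec, lp.single_apply] at this

lemma normal_sub_smul (T : ℓ2 →L[ℂ] ℓ2) (hT : IsSelfAdjoint T) (z : ℂ) :
    IsStarNormal (T - z • (1 : ℓ2 →L[ℂ] ℓ2)) := by
  constructor
  have hstar : star (T - z • (1 : ℓ2 →L[ℂ] ℓ2)) = T - (starRingEnd ℂ z) • 1 := by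
    simp [star_sub, star_smul, hT.star_eq, RCLike.star_def]
  rw [commute_iff_eq, hstar]
  simp only [sub_mul, mul_sub, smul_sub, smul_mul_assoc, mul_smul_comm, smul_smul,
    one_mul, mul_one]
  module

lemma resolvent_norm_le (T : ℓ2 →L[ℂ] ℓ2) (hT : IsSelfAdjoint T) {z : ℂ}
    (hz : z ∉ spectrum ℂ T) :
    ‖Ring.inverse (T - z • (1 : ℓ2 →L[ℂ] ℓ2))‖ ≤ 1 / Metric.infDist z (spectrum ℂ T) := by
  set d := Metric.infDist z (spectrum ℂ T) with hdd
  have hd : 0 < d :=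
    ((spectrum.isClosed (𝕜 := ℂ) T).notMem_iff_infDist_pos (spectrum.nonempty T)).1 hz
  set b := T - z • (1 : ℓ2 →L[ℂ] ℓ2) with hbdef
  have halg : algebraMap ℂ (ℓ2 →L[ℂ] ℓ2) z = z • 1 := Algebra.algebraMap_eq_smul_one z
  have hb : IsUnit b := by
    have h1 := spectrum.notMem_iff.mp hz
    rw [halg] at h1
    simpa [hbdef, neg_sub] using h1.neg
  have hnb : IsStarNormal b := normal_sub_smul T hT z
  have hRu : Ring.inverse b = ↑hb.unit⁻¹ :=
    (congrArg Ring.inverse hb.unit_spec).symm.trans (Ring.inverse_unit hb.unit)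
  have hnR : IsStarNormal (Ring.inverse b) := by
    constructor
    rw [← Ring.inverse_star b]
    exact Commute.ringInverse_ringInverse hnb.star_comm_self
  have hspec : ∀ k ∈ spectrum ℂ (Ring.inverse b), ‖k‖ ≤ 1 / d := by
    intro k hk
    rw [hRu, ← spectrum.map_inv, Set.mem_inv, hb.unit_spec] at hk
    have hbspec : spectrum ℂ b = spectrum ℂ T - {z} := by
      rw [hbdef, ← halg]; exact (spectrum.sub_singleton_eq T z).symm
    rw [hbspec, Set.sub_singleton] at hk
    obtain ⟨μ, hμ, hμk⟩ := hk
    have hzk : k⁻¹ = μ - z := hμk.symm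
    have hdist : d ≤ ‖μ - z‖ := by
      have := Metric.infDist_le_dist_of_mem (x := z) hμ
      calc d ≤ dist z μ := this
        _ = ‖μ - z‖ := by rw [dist_comm, dist_eq_norm]
    rcases eq_or_ne k 0 with h0 | h0
    · rw [h0]; simp; positivity
    · have hk0 : ‖k‖ = ‖(k : ℂ)⁻¹‖⁻¹ := by rw [norm_inv, inv_inv]
      rw [hk0, hzk, one_div]
      exact inv_anti₀ hd hdist
  have hsr : (‖Ring.inverse b‖₊ : ENNReal) ≤ ENNReal.ofReal (1 / d) := by
    rw [← IsStarNormal.spectralRadius_eq_nnnorm (Ring.inverse b)]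
    refine iSup₂_le fun k hk => ?_
    rw [← ENNReal.ofReal_coe_nnreal, coe_nnnorm]
    exact ENNReal.ofReal_le_ofReal (hspec k hk)
  rw [← ENNReal.ofReal_coe_nnreal, coe_nnnorm] at hsr
  exact (ENNReal.ofReal_le_ofReal_iff (by positivity)).1 hsr

theorem stmt0 (T : ℓ2 →L[ℂ] ℓ2) (hT : IsSelfAdjoint T) (x : ℓ2)
    (f : ℕ → ℕ) (hf : ∀ n, n < f n)
    (C₁ C₂ : ℝ) (hC₁ : 0 ≤ C₁) (hC₂ : 0 ≤ C₂)
    (α β : ℕ → ℝ) (hα : ∀ n, 0 ≤ α n) (hβ : ∀ n, 0 ≤ β n)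
    (hcol : ∀ n, ‖((1 : ℓ2 →L[ℂ] ℓ2) - Pn (f n)).comp (T.comp (Pn n))‖ ≤ C₁ * α n)
    (hx : ∀ m, ‖Pn m x - x‖ ≤ C₂ * β m) :
    ∀ z : ℂ, z ∉ spectrum ℂ T → ∀ n : ℕ, ∀ y : ℓ2, Pn n y = y →
      ‖y - Ring.inverse (T - z • (1 : ℓ2 →L[ℂ] ℓ2)) x‖ ≤
        (C₂ * β (f n) + C₁ * α n * ‖y‖ +
            ‖Pn (f n) ((T - z • (1 : ℓ2 →L[ℂ] ℓ2)) y) - Pn (f n) x‖) /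
          Metric.infDist z (spectrum ℂ T) := by
  intro z hz n y hy
  set d := Metric.infDist z (spectrum ℂ T) with hdd
  have hd : 0 < d :=
    ((spectrum.isClosed (𝕜 := ℂ) T).notMem_iff_infDist_pos (spectrum.nonempty T)).1 hz
  set b := T - z • (1 : ℓ2 →L[ℂ] ℓ2) with hbdef
  have hb : IsUnit b := by
    have h1 := spectrum.notMem_iff.mp hz
    rw [Algebra.algebraMap_eq_smul_one] at h1
    simpa [hbdef, neg_sub] using h1.neg
  have hRnorm : ‖Ring.inverse b‖ ≤ 1 / d := resolvent_norm_le T hT hz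
  set R := Ring.inverse b with hRdef
  have hmul1 : b * R = 1 := Ring.mul_inverse_cancel b hb
  have hmul2 : R * b = 1 := Ring.inverse_mul_cancel b hb
  have hyf : Pn (f n) y = y := Pn_eq_self (spanFirst_mono (hf n).le (mem_of_Pn_eq_self hy))
  have hbyx : b (y - R x) = b y - x := by
    have hbr : b (R x) = x := by
      have := congrArg (fun S : ℓ2 →L[ℂ] ℓ2 => S x) hmul1
      simpa [ContinuousLinearMap.mul_apply] using this
    rw [map_sub, hbr]
  have hkey : ‖y - R x‖ ≤ (1 / d) * ‖b y - x‖ := by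
    have h1 : R (b (y - R x)) = y - R x := by
      have := congrArg (fun S : ℓ2 →L[ℂ] ℓ2 => S (y - R x)) hmul2
      simpa [ContinuousLinearMap.mul_apply] using this
    calc ‖y - R x‖ = ‖R (b (y - R x))‖ := by rw [h1]
      _ ≤ ‖R‖ * ‖b (y - R x)‖ := R.le_opNorm _
      _ ≤ (1 / d) * ‖b (y - R x)‖ :=
          mul_le_mul_of_nonneg_right hRnorm (norm_nonneg _)
      _ = (1 / d) * ‖b y - x‖ := by rw [hbyx]
  have h2 : ‖x - Pn (f n) x‖ ≤ C₂ * β (f n) := by rw [norm_sub_rev]; exact hx (f n)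
  have h3 : b y - Pn (f n) (b y) =
      (((1 : ℓ2 →L[ℂ] ℓ2) - Pn (f n)).comp (T.comp (Pn n))) y := by
    simp only [ContinuousLinearMap.comp_apply, hy, ContinuousLinearMap.sub_apply,
      ContinuousLinearMap.one_apply]
    rw [hbdef]
    simp only [ContinuousLinearMap.sub_apply, ContinuousLinearMap.smul_apply,
      ContinuousLinearMap.one_apply, map_sub, _root_.map_smul, hyf]
    abel
  have h4 : ‖b y - Pn (f n) (b y)‖ ≤ C₁ * α n * ‖y‖ := by
    rw [h3]
    exact le_trans (ContinuousLinearMap.le_opNorm _ _)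
      (mul_le_mul_of_nonneg_right (hcol n) (norm_nonneg y))
  have hsplit : ‖b y - x‖ ≤
      C₂ * β (f n) + C₁ * α n * ‖y‖ + ‖Pn (f n) (b y) - Pn (f n) x‖ := by
    have hdecomp : b y - x = ((b y - Pn (f n) (b y)) - (x - Pn (f n) x)) +
        (Pn (f n) (b y) - Pn (f n) x) := by abel
    calc ‖b y - x‖ = ‖((b y - Pn (f n) (b y)) - (x - Pn (f n) x)) +
        (Pn (f n) (b y) - Pn (f n) x)‖ := by rw [← hdecomp]
      _ ≤ ‖(b y - Pn (f n) (b y)) - (x - Pn (f n) x)‖ +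
          ‖Pn (f n) (b y) - Pn (f n) x‖ := norm_add_le _ _
      _ ≤ (‖b y - Pn (f n) (b y)‖ + ‖x - Pn (f n) x‖) +
          ‖Pn (f n) (b y) - Pn (f n) x‖ := by gcongr; exact norm_sub_le _ _
      _ ≤ (C₁ * α n * ‖y‖ + C₂ * β (f n)) + ‖Pn (f n) (b y) - Pn (f n) x‖ := by gcongr
      _ = C₂ * β (f n) + C₁ * α n * ‖y‖ + ‖Pn (f n) (b y) - Pn (f n) x‖ := by ring
  calc ‖y - R x‖ ≤ (1 / d) * ‖b y - x‖ := hkey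
    _ ≤ (1 / d) * (C₂ * β (f n) + C₁ * α n * ‖y‖ + ‖Pn (f n) (b y) - Pn (f n) x‖) :=
        mul_le_mul_of_nonneg_left hsplit (by positivity)
    _ = (C₂ * β (f n) + C₁ * α n * ‖y‖ + ‖Pn (f n) (b y) - Pn (f n) x‖) / d := by
        rw [one_div, inv_mul_eq_div]
end
end

section
/- Let μ be a finite positive Borel measure on ℝ and let a < b be real numbers. Then lim_{ε→0⁺} ∫_a^b (∫_ℝ P_H(u − λ, ε) dμ(λ)) du = μ((a,b)) + (1/2)·μ({a,b}). -/
open MeasureTheory Filter Topology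

noncomputable section

/-- The Poisson kernel for the upper half-plane. -/
def PoissonH (x y : ℝ) : ℝ := (1 / Real.pi) * y / (x ^ 2 + y ^ 2)

lemma poissonH_inner_integral {ε : ℝ} (hε : 0 < ε) (l a b : ℝ) :
    ∫ u in a..b, PoissonH (u - l) ε
      = (1 / Real.pi) * (Real.arctan ((b - l) / ε) - Real.arctan ((a - l) / ε)) := by
  have hεne : ε ≠ 0 := hε.ne'
  have h1 : ∀ u : ℝ, PoissonH (u - l) ε
      = (1 / Real.pi) * (ε⁻¹ * (1 / (1 + ((u - l) / ε) ^ 2))) := by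
    intro u
    unfold PoissonH
    have hden : (u - l) ^ 2 + ε ^ 2 ≠ 0 := by positivity
    field_simp
    ring
  simp_rw [h1]
  rw [intervalIntegral.integral_const_mul]
  congr 1
  rw [intervalIntegral.integral_const_mul]
  have h2 : (∫ u in a..b, 1 / (1 + ((u - l) / ε) ^ 2))
      = ∫ x in a - l..b - l, 1 / (1 + (x / ε) ^ 2) :=
    intervalIntegral.integral_comp_sub_right (fun x => 1 / (1 + (x / ε) ^ 2)) l
  rw [h2, intervalIntegral.integral_comp_div (fun x => 1 / (1 + x ^ 2)) hεne,
    integral_one_div_one_add_sq, smul_eq_mul]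
  field_simp

lemma arctan_scaled_tendsto_pos {c : ℝ} (hc : 0 < c) :
    Tendsto (fun ε : ℝ => Real.arctan (c / ε)) (𝓝[>] 0) (𝓝 (Real.pi / 2)) := by
  have h1 : Tendsto (fun ε : ℝ => c / ε) (𝓝[>] 0) atTop := by
    simp_rw [div_eq_mul_inv]
    exact tendsto_inv_nhdsGT_zero.const_mul_atTop hc
  exact tendsto_nhds_of_tendsto_nhdsWithin (Real.tendsto_arctan_atTop.comp h1)

lemma arctan_scaled_tendsto_neg {c : ℝ} (hc : c < 0) :
    Tendsto (fun ε : ℝ => Real.arctan (c / ε)) (𝓝[>] 0) (𝓝 (-(Real.pi / 2))) := by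
  have h1 : Tendsto (fun ε : ℝ => c / ε) (𝓝[>] 0) atBot := by
    simp_rw [div_eq_mul_inv]
    exact Tendsto.const_mul_atTop_of_neg hc tendsto_inv_nhdsGT_zero
  exact tendsto_nhds_of_tendsto_nhdsWithin (Real.tendsto_arctan_atBot.comp h1)

theorem stmt4 (μ : Measure ℝ) [IsFiniteMeasure μ] (a b : ℝ) (hab : a < b) :
    Tendsto (fun ε : ℝ => ∫ u in a..b, ∫ l, PoissonH (u - l) ε ∂μ)
      (𝓝[>] 0)
      (𝓝 ((μ (Set.Ioo a b)).toReal + (1 / 2) * (μ ({a, b} : Set ℝ)).toReal)) := by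
  have hπ : (0:ℝ) < Real.pi := Real.pi_pos
  set f : ℝ → ℝ → ℝ := fun ε l =>
    (1 / Real.pi) * (Real.arctan ((b - l) / ε) - Real.arctan ((a - l) / ε)) with hf
  set g : ℝ → ℝ := fun l =>
    Set.indicator (Set.Ioo a b) (fun _ => (1:ℝ)) l
      + Set.indicator ({a, b} : Set ℝ) (fun _ => (1/2 : ℝ)) l with hg
  -- Step 1: Fubini, for each ε > 0
  have key : ∀ ε ∈ Set.Ioi (0:ℝ),
      (∫ u in a..b, ∫ l, PoissonH (u - l) ε ∂μ) = ∫ l, f ε l ∂μ := by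
    intro ε hε
    rw [Set.mem_Ioi] at hε
    have hint : Integrable (Function.uncurry fun u l => PoissonH (u - l) ε)
        ((volume.restrict (Set.Ioc a b)).prod μ) := by
      have hcont : Continuous (Function.uncurry fun u l => PoissonH (u - l) ε) := by
        unfold PoissonH Function.uncurry
        apply Continuous.div
        · continuity
        · continuity
        · intro p; positivity
      haveI : IsFiniteMeasure (volume.restrict (Set.Ioc a b)) := by
        constructor
        rw [Measure.restrict_apply_univ]
        exact measure_Ioc_lt_top
      refine (integrable_const ((1 / Real.pi) * ε⁻¹)).mono'
        hcont.aestronglyMeasurable (Filter.Eventually.of_forall fun p => ?_)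
      unfold PoissonH Function.uncurry
      rw [Real.norm_eq_abs, abs_of_nonneg (by positivity)]
      have hrw : (1 / Real.pi) * ε⁻¹ = (1 / Real.pi) * ε / ε ^ 2 := by
        field_simp
      rw [hrw]
      apply div_le_div_of_nonneg_left (by positivity) (by positivity)
      nlinarith [sq_nonneg (p.1 - p.2)]
    rw [intervalIntegral.integral_of_le hab.le,
      MeasureTheory.integral_integral_swap hint]
    have : ∀ l, (∫ u in Set.Ioc a b, PoissonH (u - l) ε) = f ε l := by
      intro l
      rw [← intervalIntegral.integral_of_le hab.le, poissonH_inner_integral hε]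
    simp_rw [this]
  -- Step 2: integral of g
  have hm1 : MeasurableSet (Set.Ioo a b) := measurableSet_Ioo
  have hm2 : MeasurableSet ({a, b} : Set ℝ) := (measurableSet_singleton b).insert a
  have hgint : (∫ l, g l ∂μ)
      = (μ (Set.Ioo a b)).toReal + (1 / 2) * (μ ({a, b} : Set ℝ)).toReal := by
    rw [hg, integral_add
      ((integrable_const (1:ℝ)).indicator hm1)
      ((integrable_const (1/2:ℝ)).indicator hm2),
      integral_indicator_const _ hm1, integral_indicator_const _ hm2,
      smul_eq_mul, smul_eq_mul, mul_one, mul_comm]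
    rfl
  -- Step 3: dominated convergence
  have hlim : Tendsto (fun ε => ∫ l, f ε l ∂μ) (𝓝[>] 0) (𝓝 (∫ l, g l ∂μ)) := by
    apply tendsto_integral_filter_of_dominated_convergence (fun _ => (1:ℝ))
    · filter_upwards [self_mem_nhdsWithin] with ε hε
      rw [Set.mem_Ioi] at hε
      apply Continuous.aestronglyMeasurable
      apply Continuous.mul continuous_const
      exact (Real.continuous_arctan.comp (by continuity)).sub
        (Real.continuous_arctan.comp (by continuity))
    · filter_upwards [self_mem_nhdsWithin] with ε hε
      apply Filter.Eventually.of_forall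
      intro l
      rw [hf, Real.norm_eq_abs, abs_mul, abs_of_nonneg (by positivity)]
      have h1 := Real.arctan_lt_pi_div_two ((b - l) / ε)
      have h2 := Real.neg_pi_div_two_lt_arctan ((b - l) / ε)
      have h3 := Real.arctan_lt_pi_div_two ((a - l) / ε)
      have h4 := Real.neg_pi_div_two_lt_arctan ((a - l) / ε)
      have habs : |Real.arctan ((b - l) / ε) - Real.arctan ((a - l) / ε)| ≤ Real.pi := by
        rw [abs_sub_le_iff]
        constructor <;> linarith
      have hmul := mul_le_mul_of_nonneg_left habs
        (le_of_lt (by positivity : (0:ℝ) < 1 / Real.pi))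
      have hone : (1 / Real.pi) * Real.pi = 1 := by field_simp
      linarith
    · exact integrable_const 1
    · apply Filter.Eventually.of_forall
      intro l
      rcases lt_trichotomy l a with hla | hla | hla
      · -- l < a : limit 0
        have h1 : l ∉ Set.Ioo a b := by
          simp only [Set.mem_Ioo, not_and]; intro h; linarith
        have h2 : l ∉ ({a, b} : Set ℝ) := by
          simp only [Set.mem_insert_iff, Set.mem_singleton_iff]
          push_neg
          exact ⟨hla.ne, (hla.trans hab).ne⟩
        have hga : g l = 0 := by
          simp only [hg, Set.indicator_of_notMem h1, Set.indicator_of_notMem h2,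
            add_zero]
        rw [hga]
        have h5 := ((arctan_scaled_tendsto_pos (by linarith : (0:ℝ) < b - l)).sub
          (arctan_scaled_tendsto_pos (by linarith : (0:ℝ) < a - l))).const_mul
          (1 / Real.pi)
        rw [sub_self, mul_zero] at h5
        exact h5
      · -- l = a : limit 1/2
        subst hla
        have h1 : l ∉ Set.Ioo l b := by simp
        have h2 : l ∈ ({l, b} : Set ℝ) := by simp
        have hga : g l = 1/2 := by
          simp only [hg, Set.indicator_of_notMem h1, Set.indicator_of_mem h2,
            zero_add]
        rw [hga]
        have h3 : Tendsto (fun ε : ℝ => Real.arctan ((l - l) / ε)) (𝓝[>] 0) (𝓝 0) := by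
          simp
        have h5 := ((arctan_scaled_tendsto_pos (by linarith : (0:ℝ) < b - l)).sub
          h3).const_mul (1 / Real.pi)
        rw [sub_zero] at h5
        have h6 : (1 / Real.pi) * (Real.pi / 2) = 1/2 := by field_simp
        rw [h6] at h5
        exact h5
      · rcases lt_trichotomy l b with hlb | hlb | hlb
        · -- a < l < b : limit 1
          have h1 : l ∈ Set.Ioo a b := Set.mem_Ioo.mpr ⟨hla, hlb⟩
          have h2 : l ∉ ({a, b} : Set ℝ) := by
            simp only [Set.mem_insert_iff, Set.mem_singleton_iff]
            push_neg
            exact ⟨hla.ne', hlb.ne⟩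
          have hga : g l = 1 := by
            simp only [hg, Set.indicator_of_mem h1, Set.indicator_of_notMem h2,
              add_zero]
          rw [hga]
          have h5 := ((arctan_scaled_tendsto_pos (by linarith : (0:ℝ) < b - l)).sub
            (arctan_scaled_tendsto_neg (by linarith : a - l < 0))).const_mul
            (1 / Real.pi)
          have h6 : (1 / Real.pi) * (Real.pi / 2 - -(Real.pi / 2)) = 1 := by
            field_simp
            ring
          rw [h6] at h5
          exact h5
        · -- l = b : limit 1/2
          subst hlb
          have h1 : l ∉ Set.Ioo a l := by simp
          have h2 : l ∈ ({a, l} : Set ℝ) := by simp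
          have hga : g l = 1/2 := by
            simp only [hg, Set.indicator_of_notMem h1, Set.indicator_of_mem h2,
              zero_add]
          rw [hga]
          have h3 : Tendsto (fun ε : ℝ => Real.arctan ((l - l) / ε)) (𝓝[>] 0) (𝓝 0) := by
            simp
          have h5 := (h3.sub
            (arctan_scaled_tendsto_neg (by linarith : a - l < 0))).const_mul
            (1 / Real.pi)
          rw [zero_sub, neg_neg] at h5
          have h6 : (1 / Real.pi) * (Real.pi / 2) = 1/2 := by field_simp
          rw [h6] at h5
          exact h5
        · -- l > b : limit 0
          have h1 : l ∉ Set.Ioo a b := by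
            simp only [Set.mem_Ioo, not_and]; intro h; linarith
          have h2 : l ∉ ({a, b} : Set ℝ) := by
            simp only [Set.mem_insert_iff, Set.mem_singleton_iff]
            push_neg
            exact ⟨(hab.trans hlb).ne', hlb.ne'⟩
          have hga : g l = 0 := by
            simp only [hg, Set.indicator_of_notMem h1, Set.indicator_of_notMem h2,
              add_zero]
          rw [hga]
          have h5 := ((arctan_scaled_tendsto_neg (by linarith : b - l < 0)).sub
            (arctan_scaled_tendsto_neg (by linarith : a - l < 0))).const_mul
            (1 / Real.pi)
          rw [sub_self, mul_zero] at h5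
          exact h5
  have hmain := Tendsto.congr'
    (eventually_nhdsWithin_of_forall fun ε hε => (key ε hε).symm) hlim
  rwa [hgint] at hmain
end
end

section
/- For every ρ ∈ (0,1) and every ε ∈ (0,1), the integral I₁(ρ,ε) := ∫_0^ρ (2ε − ε²)cos ψ / (ε² + 2(1−ε)(1 − cos ψ)) dψ equals ((ε² − 2ε)ρ + 2(2 + ε² − 2ε)·arctan(((2 − ε)·tan(ρ/2))/ε)) / (2(1 − ε)), and I₁(ρ,ε) → π as ε → 0⁺. -/
open MeasureTheory Filter Topology

lemma key (ρ : ℝ) (hρ : ρ ∈ Set.Ioo (0 : ℝ) 1) (ε : ℝ) (hε : ε ∈ Set.Ioo (0:ℝ) 1) :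
      (∫ ψ in (0 : ℝ)..ρ, (2 * ε - ε ^ 2) * Real.cos ψ /
          (ε ^ 2 + 2 * (1 - ε) * (1 - Real.cos ψ))) =
        ((ε ^ 2 - 2 * ε) * ρ +
            2 * (2 + ε ^ 2 - 2 * ε) * Real.arctan ((2 - ε) * Real.tan (ρ / 2) / ε)) /
          (2 * (1 - ε)) := by
  obtain ⟨hρ0, hρ1⟩ := hρ
  obtain ⟨hε0, hε1⟩ := hε
  have hεne : ε ≠ 0 := ne_of_gt hε0
  have h1ε : (1:ℝ) - ε > 0 := by linarith
  set F : ℝ → ℝ := fun ψ =>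
    ((ε ^ 2 - 2 * ε) * ψ +
      2 * (2 + ε ^ 2 - 2 * ε) * Real.arctan ((2 - ε) * Real.tan (ψ / 2) / ε)) / (2 * (1 - ε))
    with hF
  have hden : ∀ ψ : ℝ, ε ^ 2 + 2 * (1 - ε) * (1 - Real.cos ψ) ≠ 0 := by
    intro ψ
    have := Real.cos_le_one ψ
    nlinarith [sq_nonneg ε]
  have hderiv : ∀ ψ ∈ Set.uIcc (0:ℝ) ρ,
      HasDerivAt F ((2 * ε - ε ^ 2) * Real.cos ψ /
        (ε ^ 2 + 2 * (1 - ε) * (1 - Real.cos ψ))) ψ := by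
    intro ψ hψ
    rw [Set.uIcc_of_le (le_of_lt hρ0)] at hψ
    obtain ⟨hψ0, hψρ⟩ := hψ
    have hcpos : 0 < Real.cos (ψ / 2) := by
      apply Real.cos_pos_of_mem_Ioo
      constructor <;> [linarith [Real.pi_gt_three]; linarith [Real.pi_gt_three]]
    have hcne : Real.cos (ψ / 2) ≠ 0 := ne_of_gt hcpos
    have h1 : HasDerivAt (fun x : ℝ => x / 2) (1 / 2) ψ := by
      simpa using (hasDerivAt_id ψ).div_const 2
    have htan : HasDerivAt (fun x : ℝ => Real.tan (x / 2))
        (1 / Real.cos (ψ / 2) ^ 2 * (1 / 2)) ψ :=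
      by have := (Real.hasDerivAt_tan hcne).comp ψ h1; exact this
    have htan2 : HasDerivAt (fun x : ℝ => (2 - ε) * Real.tan (x / 2) / ε)
        ((2 - ε) * (1 / Real.cos (ψ / 2) ^ 2 * (1 / 2)) / ε) ψ :=
      (htan.const_mul (2 - ε)).div_const ε
    have harc : HasDerivAt (fun x : ℝ => Real.arctan ((2 - ε) * Real.tan (x / 2) / ε))
        (1 / (1 + ((2 - ε) * Real.tan (ψ / 2) / ε) ^ 2) *
          ((2 - ε) * (1 / Real.cos (ψ / 2) ^ 2 * (1 / 2)) / ε)) ψ :=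
      (Real.hasDerivAt_arctan _).comp ψ htan2
    have hall : HasDerivAt F
        (((ε ^ 2 - 2 * ε) * 1 +
          2 * (2 + ε ^ 2 - 2 * ε) *
            (1 / (1 + ((2 - ε) * Real.tan (ψ / 2) / ε) ^ 2) *
              ((2 - ε) * (1 / Real.cos (ψ / 2) ^ 2 * (1 / 2)) / ε))) / (2 * (1 - ε))) ψ := by
      exact (((hasDerivAt_id ψ).const_mul (ε ^ 2 - 2 * ε)).add
        (harc.const_mul (2 * (2 + ε ^ 2 - 2 * ε)))).div_const (2 * (1 - ε))
    convert hall using 1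
    set c := Real.cos (ψ / 2) with hc
    have hs : Real.sin (ψ / 2) ^ 2 + c ^ 2 = 1 := Real.sin_sq_add_cos_sq _
    have hcos : Real.cos ψ = 2 * c ^ 2 - 1 := by
      have h := Real.cos_sq (ψ / 2)
      rw [show 2 * (ψ / 2) = ψ by ring] at h
      linarith
    have ht2c : Real.tan (ψ / 2) ^ 2 * c ^ 2 = 1 - c ^ 2 := by
      rw [Real.tan_eq_sin_div_cos, div_pow, ← hc]
      field_simp
      linarith
    have ht2' : ((2 - ε) * Real.tan (ψ / 2) / ε) ^ 2 =
        (2 - ε) ^ 2 * (1 - c ^ 2) / (c ^ 2 * ε ^ 2) := by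
      rw [← ht2c]
      field_simp
    rw [hcos, ht2']
    have hD : ε ^ 2 + 2 * (1 - ε) * (1 - (2 * c ^ 2 - 1)) ≠ 0 := by
      rw [← hcos]; exact hden ψ
    have hc2 : c ^ 2 ≠ 0 := pow_ne_zero 2 hcne
    have h1u : 1 + (2 - ε) ^ 2 * (1 - c ^ 2) / (c ^ 2 * ε ^ 2) ≠ 0 := by
      have h1 : (0:ℝ) < c ^ 2 * ε ^ 2 := by positivity
      have h2 : 0 ≤ (2 - ε) ^ 2 * (1 - c ^ 2) := by
        apply mul_nonneg (sq_nonneg _); nlinarith [Real.sin_sq_add_cos_sq (ψ / 2)]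
      positivity
    have hQ : c ^ 2 * ε ^ 2 + (2 - ε) ^ 2 * (1 - c ^ 2) ≠ 0 := by
      have h2 : 0 ≤ 1 - c ^ 2 := by nlinarith [hs, sq_nonneg (Real.sin (ψ / 2))]
      have : 0 < c ^ 2 * ε ^ 2 := by positivity
      nlinarith [sq_nonneg (2 - ε)]
    rw [show 1 + (2 - ε) ^ 2 * (1 - c ^ 2) / (c ^ 2 * ε ^ 2) =
        (c ^ 2 * ε ^ 2 + (2 - ε) ^ 2 * (1 - c ^ 2)) / (c ^ 2 * ε ^ 2) by field_simp]
    field_simp [show ε ^ 2 * c ^ 2 + (2 - ε) ^ 2 * (1 - c ^ 2) ≠ 0 by rwa [mul_comm (ε ^ 2)]]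
    ring
  have hint : IntervalIntegrable (fun ψ => (2 * ε - ε ^ 2) * Real.cos ψ /
      (ε ^ 2 + 2 * (1 - ε) * (1 - Real.cos ψ))) volume 0 ρ := by
    apply Continuous.intervalIntegrable
    exact (continuous_const.mul Real.continuous_cos).div
      (continuous_const.add (continuous_const.mul (continuous_const.sub Real.continuous_cos)))
      hden
  rw [intervalIntegral.integral_eq_sub_of_hasDerivAt hderiv hint]
  simp [hF, Real.tan_zero, Real.arctan_zero]

theorem stmt8 (ρ : ℝ) (hρ : ρ ∈ Set.Ioo (0 : ℝ) 1) :
    (∀ ε ∈ Set.Ioo (0 : ℝ) 1,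
      (∫ ψ in (0 : ℝ)..ρ, (2 * ε - ε ^ 2) * Real.cos ψ /
          (ε ^ 2 + 2 * (1 - ε) * (1 - Real.cos ψ))) =
        ((ε ^ 2 - 2 * ε) * ρ +
            2 * (2 + ε ^ 2 - 2 * ε) * Real.arctan ((2 - ε) * Real.tan (ρ / 2) / ε)) /
          (2 * (1 - ε))) ∧
    Tendsto
      (fun ε : ℝ => ∫ ψ in (0 : ℝ)..ρ, (2 * ε - ε ^ 2) * Real.cos ψ /
        (ε ^ 2 + 2 * (1 - ε) * (1 - Real.cos ψ)))
      (𝓝[>] 0) (𝓝 Real.pi) := by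
  obtain ⟨hρ0, hρ1⟩ := hρ
  refine ⟨fun ε hε => key ρ ⟨hρ0, hρ1⟩ ε hε, ?_⟩
  have heq : ∀ᶠ ε in 𝓝[>] (0:ℝ),
      (∫ ψ in (0 : ℝ)..ρ, (2 * ε - ε ^ 2) * Real.cos ψ /
        (ε ^ 2 + 2 * (1 - ε) * (1 - Real.cos ψ))) =
      ((ε ^ 2 - 2 * ε) * ρ +
          2 * (2 + ε ^ 2 - 2 * ε) * Real.arctan ((2 - ε) * Real.tan (ρ / 2) / ε)) /
        (2 * (1 - ε)) := by
    filter_upwards [Ioo_mem_nhdsGT_of_mem (Set.mem_Ico.mpr ⟨le_refl (0:ℝ), one_pos⟩)] with ε hε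
    exact key ρ ⟨hρ0, hρ1⟩ ε hε
  rw [tendsto_congr' heq]
  have htpos : 0 < Real.tan (ρ / 2) := by
    apply Real.tan_pos_of_pos_of_lt_pi_div_two (by linarith)
    linarith [Real.pi_gt_three]
  have h1 : Tendsto (fun ε : ℝ => (2 - ε) * Real.tan (ρ / 2) / ε) (𝓝[>] 0) atTop := by
    have : Tendsto (fun ε : ℝ => (2 - ε) * Real.tan (ρ / 2)) (𝓝[>] 0)
        (𝓝 ((2 - 0) * Real.tan (ρ / 2))) :=
      ((continuous_const.sub continuous_id).mul continuous_const).continuousAt.tendsto.mono_left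
        nhdsWithin_le_nhds
    simpa [div_eq_mul_inv] using this.pos_mul_atTop (by nlinarith) tendsto_inv_nhdsGT_zero
  have h2 : Tendsto (fun ε : ℝ => Real.arctan ((2 - ε) * Real.tan (ρ / 2) / ε)) (𝓝[>] 0)
      (𝓝 (Real.pi / 2)) :=
    (Real.tendsto_arctan_atTop.mono_right nhdsWithin_le_nhds).comp h1
  have h3 : Tendsto (fun ε : ℝ =>
      ((ε ^ 2 - 2 * ε) * ρ +
          2 * (2 + ε ^ 2 - 2 * ε) * Real.arctan ((2 - ε) * Real.tan (ρ / 2) / ε)) /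
        (2 * (1 - ε))) (𝓝[>] 0)
      (𝓝 (((0 ^ 2 - 2 * 0) * ρ + 2 * (2 + 0 ^ 2 - 2 * 0) * (Real.pi / 2)) / (2 * (1 - 0)))) := by
    apply Tendsto.div
    · apply Tendsto.add
      · exact (((continuous_id.pow 2).sub (continuous_const.mul continuous_id)).mul
          continuous_const).continuousAt.tendsto.mono_left nhdsWithin_le_nhds
      · exact ((continuous_const.mul ((continuous_const.add (continuous_id.pow 2)).sub
          (continuous_const.mul continuous_id))).continuousAt.tendsto.mono_left
          nhdsWithin_le_nhds).mul h2
    · exact (continuous_const.mul (continuous_const.sub continuous_id)).continuousAt.tendsto.mono_left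
        nhdsWithin_le_nhds
    · norm_num
  convert h3 using 2
  ring
end

section
/- Let α > 0. For all x, y ∈ ℝ with |y| ≥ α, one has 4x/((x − 1)² + y²) ≥ −2/(√(1 + α²) + 1). Consequently, for every ε > 0 and every λ ∈ ℂ with λ ≠ 0 and α·|Re λ| ≤ |Im λ|, one has |ε + λ|²/|ε − λ|² ≥ 1 − 2/(√(1 + α²) + 1) > 0. -/
open MeasureTheory Filter Topology

theorem stmt10 (α : ℝ) (hα : 0 < α) :
    (∀ x y : ℝ, α ≤ |y| →
      -2 / (Real.sqrt (1 + α ^ 2) + 1) ≤ 4 * x / ((x - 1) ^ 2 + y ^ 2)) ∧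
    (∀ ε : ℝ, 0 < ε → ∀ l : ℂ, l ≠ 0 → α * |l.re| ≤ |l.im| →
      1 - 2 / (Real.sqrt (1 + α ^ 2) + 1) ≤
        ‖(ε : ℂ) + l‖ ^ 2 / ‖(ε : ℂ) - l‖ ^ 2) ∧
    0 < 1 - 2 / (Real.sqrt (1 + α ^ 2) + 1) := by
  set s := Real.sqrt (1 + α ^ 2) with hs
  have hs2 : s ^ 2 = 1 + α ^ 2 := Real.sq_sqrt (by positivity)
  have hs1 : 1 < s := by
    nlinarith [Real.sqrt_nonneg (1 + α ^ 2)]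
  refine ⟨?_, ?_, ?_⟩
  · intro x y hy
    have hy2 : α ^ 2 ≤ y ^ 2 := by
      have := sq_abs y
      nlinarith [abs_nonneg y]
    have hD : 0 < (x - 1) ^ 2 + y ^ 2 := by nlinarith [sq_nonneg (x - 1)]
    rw [div_le_div_iff₀ (by linarith) hD]
    nlinarith [sq_nonneg (x + s)]
  · intro ε hε l hl hli
    have hb2 : α ^ 2 * l.re ^ 2 ≤ l.im ^ 2 := by
      have h := mul_self_le_mul_self (by positivity) hli
      have h1 := sq_abs l.re
      have h2 := sq_abs l.im
      nlinarith
    have hbne : l.im ≠ 0 := by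
      intro h
      apply hl
      have : l.re = 0 := by
        rw [h] at hli
        simp at hli
        have : α * |l.re| = 0 := le_antisymm hli (by positivity)
        rcases mul_eq_zero.mp this with h' | h'
        · exact absurd h' hα.ne'
        · exact abs_eq_zero.mp h'
      exact Complex.ext this h
    have hN : ‖(ε : ℂ) + l‖ ^ 2 = (ε + l.re) ^ 2 + l.im ^ 2 := by
      rw [Complex.sq_norm, Complex.normSq_apply]; simp; ring
    have hDe : ‖(ε : ℂ) - l‖ ^ 2 = (ε - l.re) ^ 2 + l.im ^ 2 := by
      rw [Complex.sq_norm, Complex.normSq_apply]; simp; ring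
    rw [hN, hDe]
    have hD : 0 < (ε - l.re) ^ 2 + l.im ^ 2 := by
      have := sq_nonneg (ε - l.re)
      have : 0 < l.im ^ 2 := by positivity
      nlinarith [sq_nonneg (ε - l.re)]
    rw [sub_div' (by linarith : s + 1 ≠ 0), div_le_div_iff₀ (by linarith) hD]
    nlinarith [sq_nonneg (ε + s * l.re)]
  · rw [sub_pos, div_lt_one (by linarith)]
    linarith
end

section
/- Let μ be a finite positive Borel measure on ℝ, let (I_m)_{m∈ℕ} be pairwise disjoint nonempty open intervals and U = ⋃_{m∈ℕ} I_m. For each m, n ∈ ℕ let a_{m,n} < b_{m,n} be real numbers with (a_{m,n}, b_{m,n}) ⊆ (a_{m,n+1}, b_{m,n+1}) ⊆ I_m and ⋃_{n∈ℕ} (a_{m,n}, b_{m,n}) = I_m, and set U_n = ⋃_{m=1}^{n} (a_{m,n}, b_{m,n}). Let (ε_n) be a sequence of positive reals with ε_n → 0, and assume that for every λ in the topological boundary ∂U of U, dist(λ, U_n)/ε_n → ∞ as n → ∞. Then lim_{n→∞} ∫_{U_n} (∫_ℝ P_H(u − λ, ε_n) dμ(λ)) du = μ(U). -/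
open MeasureTheory Filter Topology

noncomputable section

lemma poisson_nonneg {ε : ℝ} (hε : 0 < ε) (x : ℝ) : 0 ≤ PoissonH x ε := by
  unfold PoissonH; positivity

lemma poisson_eq {ε : ℝ} (hε : 0 < ε) (x : ℝ) :
    PoissonH x ε = (Real.pi * ε)⁻¹ * (1 + (x / ε) ^ 2)⁻¹ := by
  unfold PoissonH
  have h1 : x ^ 2 + ε ^ 2 ≠ 0 := by positivity
  have h2 : (1 : ℝ) + (x / ε) ^ 2 ≠ 0 := by positivity
  field_simp
  ring

lemma poisson_le {ε : ℝ} (hε : 0 < ε) (x : ℝ) : PoissonH x ε ≤ (Real.pi * ε)⁻¹ := by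
  rw [poisson_eq hε]
  have h1 : (1 + (x / ε) ^ 2)⁻¹ ≤ 1 := by
    rw [inv_le_one_iff₀]; right; nlinarith [sq_nonneg (x / ε)]
  have h2 : (0:ℝ) ≤ (Real.pi * ε)⁻¹ := by positivity
  calc (Real.pi * ε)⁻¹ * (1 + (x / ε) ^ 2)⁻¹ ≤ (Real.pi * ε)⁻¹ * 1 := by
        exact mul_le_mul_of_nonneg_left h1 h2
    _ = (Real.pi * ε)⁻¹ := mul_one _

lemma poisson_integrable {ε : ℝ} (hε : 0 < ε) (l : ℝ) :
    Integrable (fun u : ℝ => PoissonH (u - l) ε) := by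
  have h : Integrable (fun u : ℝ => (Real.pi * ε)⁻¹ * (1 + ((u - l) / ε) ^ 2)⁻¹) :=
    (((integrable_inv_one_add_sq.comp_div hε.ne').comp_sub_right l).const_mul _)
  exact h.congr (by filter_upwards with u using (poisson_eq hε _).symm)

lemma poisson_integral_total {ε : ℝ} (hε : 0 < ε) (l : ℝ) :
    ∫ u : ℝ, PoissonH (u - l) ε = 1 := by
  have h1 : ∫ u : ℝ, PoissonH (u - l) ε
      = ∫ u : ℝ, (Real.pi * ε)⁻¹ * (1 + ((u - l) / ε) ^ 2)⁻¹ := by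
    congr 1; ext u; exact poisson_eq hε _
  rw [h1, MeasureTheory.integral_const_mul]
  have h2 : ∫ u : ℝ, (1 + ((u - l) / ε) ^ 2)⁻¹ = ∫ u : ℝ, (1 + (u / ε) ^ 2)⁻¹ :=
    integral_sub_right_eq_self (fun u => (1 + (u / ε) ^ 2)⁻¹) l
  rw [h2, Measure.integral_comp_div (fun x : ℝ => (1 + x ^ 2)⁻¹) ε,
    integral_univ_inv_one_add_sq]
  rw [abs_of_pos hε, smul_eq_mul]
  field_simp

lemma poisson_integral_Ioo {ε : ℝ} (hε : 0 < ε) (l p q : ℝ) (hpq : p ≤ q) :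
    ∫ u in Set.Ioo p q, PoissonH (u - l) ε
      = (Real.arctan ((q - l) / ε) - Real.arctan ((p - l) / ε)) / Real.pi := by
  rw [← MeasureTheory.integral_Ioc_eq_integral_Ioo,
    ← intervalIntegral.integral_of_le hpq]
  have h1 : ∀ u : ℝ, PoissonH (u - l) ε = (Real.pi * ε)⁻¹ * (1 + ((u - l) / ε) ^ 2)⁻¹ :=
    fun u => poisson_eq hε _
  simp_rw [h1]
  rw [intervalIntegral.integral_const_mul]
  rw [intervalIntegral.integral_comp_sub_right (fun u => (1 + (u / ε) ^ 2)⁻¹) l]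
  rw [intervalIntegral.integral_comp_div (c := ε) (fun x : ℝ => (1 + x ^ 2)⁻¹) hε.ne']
  rw [integral_inv_one_add_sq, smul_eq_mul]
  have : Real.pi ≠ 0 := Real.pi_ne_zero
  field_simp

lemma poisson_setIntegral_nonneg {ε : ℝ} (hε : 0 < ε) (l : ℝ) (S : Set ℝ) :
    0 ≤ ∫ u in S, PoissonH (u - l) ε :=
  integral_nonneg fun u => poisson_nonneg hε _

lemma poisson_setIntegral_le_one {ε : ℝ} (hε : 0 < ε) (l : ℝ) (S : Set ℝ) :
    ∫ u in S, PoissonH (u - l) ε ≤ 1 := by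
  rw [← poisson_integral_total hε l]
  exact setIntegral_le_integral (poisson_integrable hε l)
    (Filter.Eventually.of_forall fun u => poisson_nonneg hε _)

lemma poisson_lower {ε : ℝ} (hε : 0 < ε) (l δ : ℝ) (S : Set ℝ)
    (h : Set.Ioo (l - δ) (l + δ) ⊆ S) (hδ : 0 ≤ δ) :
    2 * Real.arctan (δ / ε) / Real.pi ≤ ∫ u in S, PoissonH (u - l) ε := by
  have hIoo : ∫ u in Set.Ioo (l - δ) (l + δ), PoissonH (u - l) ε
      = 2 * Real.arctan (δ / ε) / Real.pi := by
    rw [poisson_integral_Ioo hε l _ _ (by linarith)]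
    have e1 : l + δ - l = δ := by ring
    have e2 : l - δ - l = -δ := by ring
    rw [e1, e2, neg_div, Real.arctan_neg]
    ring
  rw [← hIoo]
  exact setIntegral_mono_set ((poisson_integrable hε l).integrableOn)
    (Filter.Eventually.of_forall fun u => poisson_nonneg hε _)
    (HasSubset.Subset.eventuallyLE h)

lemma poisson_distant {ε : ℝ} (hε : 0 < ε) (l d : ℝ) (hd : 0 ≤ d) (S : Set ℝ)
    (hS : ∀ u ∈ S, d ≤ |u - l|) :
    ∫ u in S, PoissonH (u - l) ε ≤ 1 - 2 * Real.arctan (d / ε) / Real.pi := by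
  have hsub : S ⊆ (Set.Ioo (l - d) (l + d))ᶜ := by
    intro u hu hmem
    rcases hmem with ⟨h1, h2⟩
    have habs : |u - l| < d := abs_lt.mpr ⟨by linarith, by linarith⟩
    exact absurd habs (not_lt.mpr (hS u hu))
  have hcompl : ∫ u in (Set.Ioo (l - d) (l + d))ᶜ, PoissonH (u - l) ε
      = 1 - 2 * Real.arctan (d / ε) / Real.pi := by
    have hadd := integral_add_compl (measurableSet_Ioo (a := l - d) (b := l + d))
      (poisson_integrable hε l)
    have hIoo : ∫ u in Set.Ioo (l - d) (l + d), PoissonH (u - l) ε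
        = 2 * Real.arctan (d / ε) / Real.pi := by
      rw [poisson_integral_Ioo hε l _ _ (by linarith)]
      have e1 : l + d - l = d := by ring
      have e2 : l - d - l = -d := by ring
      rw [e1, e2, neg_div, Real.arctan_neg]
      ring
    rw [poisson_integral_total hε l, hIoo] at hadd
    linarith
  rw [← hcompl]
  exact setIntegral_mono_set ((poisson_integrable hε l).integrableOn)
    (Filter.Eventually.of_forall fun u => poisson_nonneg hε _)
    (HasSubset.Subset.eventuallyLE hsub)

theorem stmt11 (μ : Measure ℝ) [IsFiniteMeasure μ]
    (I : ℕ → Set ℝ) (hIopen : ∀ m, IsOpen (I m)) (hInon : ∀ m, (I m).Nonempty)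
    (hIint : ∀ m, (I m).OrdConnected)
    (hIdisj : Pairwise (Function.onFun Disjoint I))
    (a b : ℕ → ℕ → ℝ) (hab : ∀ m n, a m n < b m n)
    (hnest : ∀ m n, Set.Ioo (a m n) (b m n) ⊆ Set.Ioo (a m (n + 1)) (b m (n + 1)))
    (hsub : ∀ m n, Set.Ioo (a m n) (b m n) ⊆ I m)
    (hexh : ∀ m, (⋃ n, Set.Ioo (a m n) (b m n)) = I m)
    (ε : ℕ → ℝ) (hεpos : ∀ n, 0 < ε n) (hε0 : Tendsto ε atTop (𝓝 0))
    (hbdry : ∀ l ∈ frontier (⋃ m, I m),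
      Tendsto
        (fun n => Metric.infDist l (⋃ m ∈ Finset.range n, Set.Ioo (a m n) (b m n)) / ε n)
        atTop atTop) :
    Tendsto
      (fun n => ∫ u in (⋃ m ∈ Finset.range n, Set.Ioo (a m n) (b m n)),
        ∫ l, PoissonH (u - l) (ε n) ∂μ)
      atTop (𝓝 ((μ (⋃ m, I m)).toReal)) := by
  set U : Set ℝ := ⋃ m, I m with hU
  set Un : ℕ → Set ℝ := fun n => ⋃ m ∈ Finset.range n, Set.Ioo (a m n) (b m n) with hUn
  have hUopen : IsOpen U := isOpen_iUnion hIopen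
  have hUnU : ∀ n, Un n ⊆ U := fun n =>
    Set.iUnion₂_subset fun m _ => (hsub m n).trans (Set.subset_iUnion I m)
  have hUnvol : ∀ n, volume (Un n) < ⊤ := by
    intro n
    refine lt_of_le_of_lt (measure_biUnion_finset_le _ _) ?_
    refine ENNReal.sum_lt_top.mpr fun m _ => ?_
    rw [Real.volume_Ioo]
    exact ENNReal.ofReal_lt_top
  -- continuity of the kernel
  have hcont : ∀ n, Continuous (fun p : ℝ × ℝ => PoissonH (p.1 - p.2) (ε n)) := by
    intro n
    unfold PoissonH
    apply Continuous.div
    · fun_prop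
    · fun_prop
    · intro p
      have := hεpos n
      positivity
  -- Fubini swap
  have key : ∀ n, (∫ u in Un n, ∫ l, PoissonH (u - l) (ε n) ∂μ)
      = ∫ l, (∫ u in Un n, PoissonH (u - l) (ε n)) ∂μ := by
    intro n
    have hfin : IsFiniteMeasure (volume.restrict (Un n)) :=
      ⟨by rw [Measure.restrict_apply_univ]; exact hUnvol n⟩
    have hint : Integrable (Function.uncurry fun u l => PoissonH (u - l) (ε n))
        ((volume.restrict (Un n)).prod μ) := by
      apply Integrable.mono' (integrable_const ((Real.pi * ε n)⁻¹))
      · exact ((hcont n).stronglyMeasurable).aestronglyMeasurable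
      · filter_upwards with p
        simp only [Function.uncurry]
        rw [Real.norm_eq_abs, abs_of_nonneg (poisson_nonneg (hεpos n) _)]
        exact poisson_le (hεpos n) _
    exact integral_integral_swap hint
  -- measurability of the inner integral as a function of l
  have hFm : ∀ n, AEStronglyMeasurable
      (fun l => ∫ u in Un n, PoissonH (u - l) (ε n)) μ := by
    intro n
    apply StronglyMeasurable.aestronglyMeasurable
    have hsm : StronglyMeasurable (Function.uncurry fun (l u : ℝ) => PoissonH (u - l) (ε n)) := by
      have : Continuous (fun p : ℝ × ℝ => PoissonH (p.2 - p.1) (ε n)) :=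
        (hcont n).comp (continuous_swap)
      exact this.stronglyMeasurable
    exact hsm.integral_prod_right
  -- nesting monotonicity
  have hmono : ∀ m n n', n ≤ n' →
      Set.Ioo (a m n) (b m n) ⊆ Set.Ioo (a m n') (b m n') := by
    intro m n n' h
    induction h with
    | refl => exact subset_rfl
    | step _ ih => exact ih.trans (hnest m _)
  -- arctan limit helper
  have harctan : ∀ d : ℕ → ℝ, Tendsto (fun n => d n / ε n) atTop atTop →
      Tendsto (fun n => Real.arctan (d n / ε n)) atTop (𝓝 (Real.pi / 2)) := by
    intro d hd
    exact (tendsto_nhds_of_tendsto_nhdsWithin Real.tendsto_arctan_atTop).comp hd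
  have hconstdiv : ∀ c : ℝ, 0 < c → Tendsto (fun n => c / ε n) atTop atTop := by
    intro c hc
    have h1 : Tendsto ε atTop (𝓝[>] 0) :=
      tendsto_nhdsWithin_of_tendsto_nhds_of_eventually_within _ hε0
        (Filter.Eventually.of_forall fun n => hεpos n)
    have h2 : Tendsto (fun n => (ε n)⁻¹) atTop atTop := h1.inv_tendsto_nhdsGT_zero
    simpa [div_eq_mul_inv] using h2.const_mul_atTop hc
  -- pointwise convergence
  have hptw : ∀ l, Tendsto (fun n => ∫ u in Un n, PoissonH (u - l) (ε n)) atTop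
      (𝓝 (Set.indicator U (fun _ => (1:ℝ)) l)) := by
    intro l
    by_cases hl : l ∈ U
    · rw [Set.indicator_of_mem hl]
      obtain ⟨m₀, hm₀⟩ := Set.mem_iUnion.mp hl
      rw [← hexh m₀] at hm₀
      obtain ⟨n₀, hn₀⟩ := Set.mem_iUnion.mp hm₀
      set δ := min (l - a m₀ n₀) (b m₀ n₀ - l) with hδdef
      have hδ : 0 < δ := lt_min (by linarith [hn₀.1]) (by linarith [hn₀.2])
      have hsubset : ∀ n, max n₀ (m₀ + 1) ≤ n → Set.Ioo (l - δ) (l + δ) ⊆ Un n := by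
        intro n hn
        have h1 : Set.Ioo (l - δ) (l + δ) ⊆ Set.Ioo (a m₀ n₀) (b m₀ n₀) :=
          Set.Ioo_subset_Ioo (by have := min_le_left (l - a m₀ n₀) (b m₀ n₀ - l); linarith)
            (by have := min_le_right (l - a m₀ n₀) (b m₀ n₀ - l); linarith)
        have h2 := hmono m₀ n₀ n (le_trans (le_max_left _ _) hn)
        have h3 : Set.Ioo (a m₀ n) (b m₀ n) ⊆ Un n := fun x hx =>
          Set.mem_biUnion (Finset.mem_range.mpr (lt_of_lt_of_le (Nat.lt_succ_self m₀)
            (le_trans (le_max_right _ _) hn))) hx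
        exact (h1.trans h2).trans h3
      have hlow : ∀ᶠ n in atTop, 2 * Real.arctan (δ / ε n) / Real.pi
          ≤ ∫ u in Un n, PoissonH (u - l) (ε n) := by
        filter_upwards [eventually_ge_atTop (max n₀ (m₀ + 1))] with n hn
        exact poisson_lower (hεpos n) l δ (Un n) (hsubset n hn) hδ.le
      have hup : ∀ n, (∫ u in Un n, PoissonH (u - l) (ε n)) ≤ 1 :=
        fun n => poisson_setIntegral_le_one (hεpos n) l (Un n)
      have hlimlow : Tendsto (fun n => 2 * Real.arctan (δ / ε n) / Real.pi) atTop (𝓝 1) := by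
        have := ((harctan (fun _ => δ) (hconstdiv δ hδ)).const_mul 2).div_const Real.pi
        have heq : 2 * (Real.pi / 2) / Real.pi = 1 := by
          field_simp
        rwa [heq] at this
      exact tendsto_of_tendsto_of_tendsto_of_le_of_le' hlimlow tendsto_const_nhds hlow
        (Filter.Eventually.of_forall hup)
    · rw [Set.indicator_of_notMem hl]
      -- the infDist / ε tends to infinity
      have hd : Tendsto (fun n => Metric.infDist l (Un n) / ε n) atTop atTop := by
        by_cases hcl : l ∈ closure U
        · exact hbdry l ⟨hcl, by rwa [hUopen.interior_eq]⟩
        · have hUnon : U.Nonempty := ⟨_, Set.mem_iUnion.mpr ⟨0, (hInon 0).some_mem⟩⟩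
          have hd0 : 0 < Metric.infDist l U := by
            have h := (isClosed_closure (s := U)).notMem_iff_infDist_pos (x := l) hUnon.closure
            rw [Metric.infDist_closure] at h
            exact h.mp hcl
          refine tendsto_atTop_mono' atTop ?_ (hconstdiv _ hd0)
          filter_upwards [eventually_ge_atTop 1] with n hn
          have hne : (Un n).Nonempty := by
            refine ⟨(a 0 n + b 0 n) / 2, Set.mem_biUnion (Finset.mem_range.mpr hn) ?_⟩
            constructor <;> nlinarith [hab 0 n]
          have hle : Metric.infDist l U ≤ Metric.infDist l (Un n) :=
            Metric.infDist_le_infDist_of_subset (hUnU n) hne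
          have hpos := hεpos n
          gcongr
      have hup : ∀ n, (∫ u in Un n, PoissonH (u - l) (ε n))
          ≤ 1 - 2 * Real.arctan (Metric.infDist l (Un n) / ε n) / Real.pi := by
        intro n
        refine poisson_distant (hεpos n) l _ Metric.infDist_nonneg (Un n) fun u hu => ?_
        have h := Metric.infDist_le_dist_of_mem (x := l) hu
        rwa [Real.dist_eq, abs_sub_comm] at h
      have hlow : ∀ n, 0 ≤ ∫ u in Un n, PoissonH (u - l) (ε n) :=
        fun n => poisson_setIntegral_nonneg (hεpos n) l (Un n)
      have hlimup : Tendsto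
          (fun n => 1 - 2 * Real.arctan (Metric.infDist l (Un n) / ε n) / Real.pi)
          atTop (𝓝 0) := by
        have h1 := ((harctan _ hd).const_mul 2).div_const Real.pi
        have h2 := (tendsto_const_nhds (x := (1:ℝ)) (f := atTop)).sub h1
        have heq : (1:ℝ) - 2 * (Real.pi / 2) / Real.pi = 0 := by
          field_simp
          ring
        rwa [heq] at h2
      exact tendsto_of_tendsto_of_tendsto_of_le_of_le tendsto_const_nhds hlimup hlow hup
  -- dominated convergence
  have hfinal : Tendsto (fun n => ∫ l, (∫ u in Un n, PoissonH (u - l) (ε n)) ∂μ) atTop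
      (𝓝 (∫ l, Set.indicator U (fun _ => (1:ℝ)) l ∂μ)) := by
    refine tendsto_integral_of_dominated_convergence (fun _ => (1:ℝ)) hFm
      (integrable_const 1) ?_ ?_
    · intro n
      filter_upwards with l
      rw [Real.norm_eq_abs, abs_of_nonneg (poisson_setIntegral_nonneg (hεpos n) l (Un n))]
      exact poisson_setIntegral_le_one (hεpos n) l (Un n)
    · filter_upwards with l using hptw l
  have hind : ∫ l, Set.indicator U (fun _ => (1:ℝ)) l ∂μ = (μ U).toReal := by
    have := integral_indicator_one (μ := μ) hUopen.measurableSet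
    rw [measureReal_def] at this
    simpa [Pi.one_def] using this
  rw [← hind]
  exact hfinal.congr' (Filter.Eventually.of_forall fun n => (key n).symm)
end
end

section
/- Let H be a complex Hilbert space, T a bounded self-adjoint operator on H, x ∈ H, F : ℂ → ℂ a continuous function that is bounded on ℝ, and R a real number with R > ‖T‖. Then lim_{ε→0⁺} ∫_{−R}^{R} F(u) · (1/(2πi)) ((T − (u + iε)I)⁻¹ − (T − (u − iε)I)⁻¹) x du = F(T)x, where the integral is a Bochner integral of the H-valued integrand and F(T) denotes the image of T under the continuous functional calculus of the (normal) operator T applied to F. -/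
open MeasureTheory Filter Topology
open Complex Real

lemma res_cfc {H : Type*} [NormedAddCommGroup H] [InnerProductSpace ℂ H] [CompleteSpace H]
    (T : H →L[ℂ] H) (hT : IsSelfAdjoint T) (z : ℂ) (hz : z.im ≠ 0) :
    Ring.inverse (T - z • (1 : H →L[ℂ] H)) = cfc (fun w : ℂ => (w - z)⁻¹) T := by
  have hn : IsStarNormal T := hT.isStarNormal
  have hzs : ∀ w ∈ spectrum ℂ T, w - z ≠ 0 := by
    intro w hw h
    have hw' := hT.mem_spectrum_eq_re hw
    rw [sub_eq_zero] at h
    rw [← h, hw'] at hz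
    simp at hz
  have h1 : cfc (fun w : ℂ => w - z) T = T - z • (1 : H →L[ℂ] H) := by
    rw [cfc_sub (fun w : ℂ => w) (fun _ => z) T, cfc_id' ℂ T, cfc_const z T,
      Algebra.algebraMap_eq_smul_one]
  rw [← h1, ← cfc_inv (fun w : ℂ => w - z) T hzs]

lemma ker_id (lam u ε : ℝ) (hε : ε ≠ 0) :
    (1 / (2 * (π:ℂ) * I)) * ((((lam:ℂ)) - ((u:ℂ) + (ε:ℂ)*I))⁻¹ - ((lam:ℂ) - ((u:ℂ) - (ε:ℂ)*I))⁻¹)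
      = ((ε / (π * ((lam-u)^2 + ε^2)) : ℝ) : ℂ) := by
  have hπ : (π:ℂ) ≠ 0 := by exact_mod_cast Real.pi_ne_zero
  have h1 : ((lam:ℂ)) - ((u:ℂ) + (ε:ℂ)*I) ≠ 0 := by
    intro h
    have := congrArg Complex.im h
    simp at this
    exact hε this
  have h2 : ((lam:ℂ)) - ((u:ℂ) - (ε:ℂ)*I) ≠ 0 := by
    intro h
    have := congrArg Complex.im h
    simp at this
    exact hε this
  have hd : ((lam-u)^2 + ε^2 : ℝ) ≠ 0 := by positivity
  have hd' : ((((lam-u)^2 + ε^2 : ℝ)) : ℂ) ≠ 0 := by exact_mod_cast hd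
  have hab : ((lam:ℂ) - ((u:ℂ) + (ε:ℂ)*I)) * ((lam:ℂ) - ((u:ℂ) - (ε:ℂ)*I))
      = ((((lam-u)^2 + ε^2 : ℝ)) : ℂ) := by
    push_cast
    ring_nf
    rw [Complex.I_sq]
    ring
  rw [inv_sub_inv h1 h2, hab]
  have hnum : ((lam:ℂ) - ((u:ℂ) - (ε:ℂ)*I)) - ((lam:ℂ) - ((u:ℂ) + (ε:ℂ)*I)) = 2*(ε:ℂ)*I := by
    ring
  rw [hnum]
  have h2πI : (2 * (π:ℂ) * I) * ((((lam-u)^2 + ε^2 : ℝ)) : ℂ) ≠ 0 :=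
    mul_ne_zero (by simp [hπ, Complex.I_ne_zero]) hd'
  have hπd : ((π:ℂ) * ((((lam-u)^2 + ε^2 : ℝ)) : ℂ)) ≠ 0 := mul_ne_zero hπ hd'
  rw [div_mul_div_comm, one_mul, Complex.ofReal_div, Complex.ofReal_mul,
    div_eq_div_iff h2πI hπd]
  push_cast
  ring

set_option maxHeartbeats 1000000 in

lemma poisson_unif (F : ℂ → ℂ) (hF : Continuous F) (M : ℝ)
    (hM : ∀ t : ℝ, ‖F t‖ ≤ M)
    (a R : ℝ) (ha : 0 ≤ a) (haR : a < R) (η : ℝ) (hη : 0 < η) :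
    ∃ ε₀ > 0, ∀ ε : ℝ, 0 < ε → ε < ε₀ → ∀ lam : ℝ, |lam| ≤ a →
      ‖(∫ u in -R..R, F u * ((ε / (π * ((lam-u)^2 + ε^2)) : ℝ) : ℂ)) - F lam‖ < η := by
  have hπ : (0:ℝ) < π := Real.pi_pos
  set p : ℝ → ℝ := fun t => π⁻¹ * (1+t^2)⁻¹ with hp_def
  have hp_cont : Continuous p := by fun_prop (disch := intro x; positivity)
  have hp_int : Integrable p := (integrable_inv_one_add_sq).const_mul _
  have hp_nonneg : ∀ t, 0 ≤ p t := fun t => by positivity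
  have hp_total : ∫ t, p t = 1 := by
    rw [hp_def]
    simp only [integral_const_mul, integral_univ_inv_one_add_sq]
    field_simp
  have hM0 : (0:ℝ) ≤ M := le_trans (norm_nonneg _) (hM 0)
  set M' := M + 1 with hM'_def
  have hM'0 : (0:ℝ) < M' := by positivity
  set δ₁ := η / (6 * M') with hδ₁_def
  have hδ₁0 : 0 < δ₁ := div_pos hη (by positivity)
  -- choose K
  obtain ⟨K, hK0, hKτ⟩ :
      ∃ K : ℝ, 0 < K ∧ 1 - π⁻¹ * (Real.arctan K - Real.arctan (-K)) < δ₁ := by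
    have harc : Tendsto (fun K : ℝ => 1 - π⁻¹ * (Real.arctan K - Real.arctan (-K))) atTop (𝓝 0) := by
      have h1 : Tendsto Real.arctan atTop (𝓝 (π/2)) :=
        tendsto_nhds_of_tendsto_nhdsWithin tendsto_arctan_atTop
      have h2 : Tendsto (fun K : ℝ => Real.arctan (-K)) atTop (𝓝 (-(π/2))) := by
        have := (tendsto_nhds_of_tendsto_nhdsWithin tendsto_arctan_atBot).comp
          tendsto_neg_atTop_atBot
        exact this
      have h3 := ((h1.sub h2).const_mul (π⁻¹)).const_sub 1
      have : (1:ℝ) - π⁻¹ * (π/2 - -(π/2)) = 0 := by field_simp; ring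
      rw [this] at h3
      exact h3
    exact ((harc.eventually (gt_mem_nhds hδ₁0)).and (eventually_gt_atTop 0)).exists.imp
      fun K h => ⟨h.2, h.1⟩
  set τ := 1 - π⁻¹ * (Real.arctan K - Real.arctan (-K)) with hτ_def
  have hτ0 : 0 ≤ τ := by
    have h1 : Real.arctan K < π/2 := arctan_lt_pi_div_two K
    have h2 : -(π/2) < Real.arctan (-K) := neg_pi_div_two_lt_arctan (-K)
    have : π⁻¹ * (Real.arctan K - Real.arctan (-K)) ≤ 1 := by
      rw [inv_mul_le_iff₀ hπ]
      nlinarith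
    rw [hτ_def]; linarith
  -- uniform continuity
  obtain ⟨δ, hδ0, hδ⟩ : ∃ δ > 0, ∀ x ∈ Metric.closedBall (0:ℂ) (a+1),
      ∀ y ∈ Metric.closedBall (0:ℂ) (a+1), dist x y < δ → dist (F x) (F y) < η/6 := by
    have hcp : IsCompact (Metric.closedBall (0:ℂ) (a+1)) := isCompact_closedBall _ _
    have huc := hcp.uniformContinuousOn_of_continuous (hF.continuousOn)
    rw [Metric.uniformContinuousOn_iff] at huc
    obtain ⟨δ, hδ0, h⟩ := huc (η/6) (by linarith)
    exact ⟨δ, hδ0, fun x hx y hy hxy => h x hx y hy hxy⟩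
  refine ⟨min δ (min (R - a) 1) / K, div_pos (lt_min hδ0 (lt_min (by linarith) one_pos)) hK0, ?_⟩
  intro ε hε0 hεlt lam hlam
  have hεK : ε * K < min δ (min (R - a) 1) := by
    rw [lt_div_iff₀ hK0] at hεlt
    exact hεlt
  have hεKδ : ε * K < δ := lt_of_lt_of_le hεK (min_le_left _ _)
  have hεKRa : ε * K ≤ R - a := le_of_lt (lt_of_lt_of_le hεK
    (le_trans (min_le_right _ _) (min_le_left _ _)))
  have hεK1 : ε * K ≤ 1 := le_of_lt (lt_of_lt_of_le hεK
    (le_trans (min_le_right _ _) (min_le_right _ _)))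
  set A := (-R - lam)/ε with hA_def
  set B := (R - lam)/ε with hB_def
  have hBK : K ≤ B := by
    rw [hB_def, le_div_iff₀ hε0]
    have : -a ≤ lam := neg_le_of_abs_le hlam
    nlinarith [abs_le.mp hlam]
  have hAK : A ≤ -K := by
    rw [hA_def, div_le_iff₀ hε0]
    nlinarith [abs_le.mp hlam]
  have hAB : A ≤ B := le_trans hAK (le_trans (by linarith) hBK)
  have hεne : ε ≠ 0 := ne_of_gt hε0
  -- substitution u = ε t + lam
  have hsub : (∫ u in -R..R, F u * ((ε / (π * ((lam-u)^2 + ε^2)) : ℝ) : ℂ))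
      = ∫ t in A..B, F ((lam + ε*t : ℝ) : ℂ) * ((p t : ℝ) : ℂ) := by
    have hcomp := intervalIntegral.integral_comp_mul_add (a := A) (b := B)
      (f := fun u => F u * ((ε / (π * ((lam-u)^2 + ε^2)) : ℝ) : ℂ)) hεne lam
    have hA' : ε * A + lam = -R := by rw [hA_def]; field_simp; ring
    have hB' : ε * B + lam = R := by rw [hB_def]; field_simp; ring
    rw [hA', hB'] at hcomp
    have := congrArg (fun z => (ε : ℝ) • z) hcomp
    rw [smul_smul, mul_inv_cancel₀ hεne, one_smul] at this
    rw [← this, ← intervalIntegral.integral_smul]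
    apply intervalIntegral.integral_congr
    intro t _
    have hker : ε * (ε / (π * ((-(ε*t))^2 + ε^2))) = p t := by
      rw [hp_def]
      have h1 : (1 + t^2) > 0 := by positivity
      field_simp
      ring
    show (ε : ℝ) • (F (↑(ε * t + lam)) * ((ε / (π * ((lam - (ε * t + lam))^2 + ε^2)) : ℝ) : ℂ))
        = F ((lam + ε*t : ℝ) : ℂ) * ((p t : ℝ) : ℂ)
    rw [Complex.real_smul, show (ε * t + lam : ℝ) = (lam + ε * t : ℝ) by ring, ← mul_assoc,
      mul_comm ((ε:ℂ)) (F (↑(lam + ε*t))), mul_assoc, ← Complex.ofReal_mul,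
      show lam - (lam + ε * t) = -(ε*t) by ring, hker]
  rw [hsub]
  have hcast : (∫ t : ℝ, ((p t : ℝ) : ℂ)) = ((∫ t : ℝ, p t : ℝ) : ℂ) :=
    integral_ofReal (𝕜 := ℂ) (f := p)
  have hFlam : F lam = ∫ t : ℝ, F lam * ((p t : ℝ) : ℂ) := by
    rw [MeasureTheory.integral_const_mul, hcast, hp_total]
    simp
  set s : Set ℝ := Set.Ioc A B with hs_def
  have hsm : MeasurableSet s := measurableSet_Ioc
  have harg_cont : Continuous (fun t : ℝ => ((lam + ε*t : ℝ) : ℂ)) :=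
    Complex.continuous_ofReal.comp (continuous_const.add (continuous_const.mul continuous_id))
  have hint_shift : Integrable (fun t : ℝ => F ((lam + ε*t : ℝ) : ℂ) * ((p t:ℝ):ℂ)) := by
    apply Integrable.bdd_mul (hp_int.ofReal) ((hF.comp harg_cont).aestronglyMeasurable)
    exact ae_of_all _ fun t => hM (lam + ε*t)
  have hintc : Integrable (fun t : ℝ => F lam * ((p t:ℝ):ℂ)) := (hp_int.ofReal).const_mul _
  have hint1 : Integrable (fun t : ℝ => (F ((lam + ε*t : ℝ) : ℂ) - F lam) * ((p t:ℝ):ℂ)) := by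
    have := hint_shift.sub hintc
    refine this.congr (Eventually.of_forall fun t => ?_); simp [sub_mul]
  have hdecomp : (∫ t in A..B, F ((lam + ε*t : ℝ) : ℂ) * ((p t : ℝ) : ℂ)) - F lam
      = (∫ t in s, (F ((lam + ε*t : ℝ) : ℂ) - F lam) * ((p t:ℝ):ℂ)) - ∫ t in sᶜ, F lam * ((p t:ℝ):ℂ) := by
    rw [intervalIntegral.integral_of_le hAB]
    have e3 := MeasureTheory.integral_add_compl hsm hintc
    have e2 : (∫ t in s, (F ((lam + ε*t : ℝ) : ℂ) - F lam) * ((p t:ℝ):ℂ))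
        = (∫ t in s, F ((lam + ε*t : ℝ) : ℂ) * ((p t:ℝ):ℂ)) - ∫ t in s, F lam * ((p t:ℝ):ℂ) := by
      rw [← MeasureTheory.integral_sub hint_shift.integrableOn hintc.integrableOn]
      apply MeasureTheory.integral_congr_ae
      filter_upwards with t
      ring
    rw [e2]
    nth_rewrite 1 [hFlam]
    rw [← e3]
    ring
  rw [hdecomp]
  -- tail mass bounds
  have hios : ∫ t in s, p t = π⁻¹ * (Real.arctan B - Real.arctan A) := by
    rw [hs_def, ← intervalIntegral.integral_of_le hAB, hp_def]
    simp only [intervalIntegral.integral_const_mul, integral_inv_one_add_sq]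
  have hios_ge : 1 - τ ≤ ∫ t in s, p t := by
    rw [hios, hτ_def]
    have h1 : Real.arctan K ≤ Real.arctan B := arctan_strictMono.monotone hBK
    have h2 : Real.arctan A ≤ Real.arctan (-K) := arctan_strictMono.monotone hAK
    have hπinv : (0:ℝ) < π⁻¹ := by positivity
    nlinarith
  have hcompl_le : ∫ t in sᶜ, p t ≤ τ := by
    have := MeasureTheory.integral_add_compl hsm hp_int
    rw [hp_total] at this
    linarith
  have hcompl_nonneg : 0 ≤ ∫ t in sᶜ, p t :=
    MeasureTheory.integral_nonneg fun t => hp_nonneg t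
  -- Term 2
  have hterm2 : ‖∫ t in sᶜ, F lam * ((p t:ℝ):ℂ)‖ ≤ M * τ := by
    calc ‖∫ t in sᶜ, F lam * ((p t:ℝ):ℂ)‖
        ≤ ∫ t in sᶜ, ‖F lam * ((p t:ℝ):ℂ)‖ := norm_integral_le_integral_norm _
      _ ≤ ∫ t in sᶜ, M * p t := by
          apply setIntegral_mono_on (hf := hintc.norm.integrableOn)
            (hg := (hp_int.const_mul M).integrableOn) hsm.compl
          intro t _
          rw [norm_mul, Complex.norm_real, Real.norm_eq_abs, _root_.abs_of_nonneg (hp_nonneg t)]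
          exact mul_le_mul_of_nonneg_right (hM lam) (hp_nonneg t)
      _ = M * ∫ t in sᶜ, p t := MeasureTheory.integral_const_mul M _
      _ ≤ M * τ := mul_le_mul_of_nonneg_left hcompl_le hM0
  -- Term 1
  set h : ℝ → ℝ := fun t => (η/6) * p t + 2*M*Set.indicator (Set.Icc (-K) K)ᶜ p t with hh_def
  have hIccm : MeasurableSet ((Set.Icc (-K) K)ᶜ : Set ℝ) := measurableSet_Icc.compl
  have hh_int : Integrable h :=
    ((hp_int.const_mul _)).add (((hp_int.indicator hIccm)).const_mul _)
  have hh_nonneg : ∀ t, 0 ≤ h t := by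
    intro t
    have : 0 ≤ Set.indicator ((Set.Icc (-K) K)ᶜ : Set ℝ) p t :=
      Set.indicator_nonneg (fun x _ => hp_nonneg x) t
    have := hp_nonneg t
    positivity
  have hptw : ∀ t : ℝ, ‖(F ((lam + ε*t : ℝ) : ℂ) - F lam) * ((p t:ℝ):ℂ)‖ ≤ h t := by
    intro t
    rw [norm_mul, Complex.norm_real, Real.norm_eq_abs, _root_.abs_of_nonneg (hp_nonneg t)]
    by_cases ht : t ∈ Set.Icc (-K) K
    · have htK : |t| ≤ K := abs_le.mpr ⟨ht.1, ht.2⟩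
      have hd1 : dist ((lam + ε*t : ℝ) : ℂ) ((lam : ℝ) : ℂ) < δ := by
        rw [dist_eq_norm, ← Complex.ofReal_sub, Complex.norm_real, Real.norm_eq_abs]
        have : |lam + ε*t - lam| = ε * |t| := by
          rw [show lam + ε*t - lam = ε * t by ring, abs_mul, _root_.abs_of_nonneg hε0.le]
        rw [this]
        calc ε * |t| ≤ ε * K := mul_le_mul_of_nonneg_left htK hε0.le
          _ < δ := hεKδ
      have hmem1 : ((lam + ε*t : ℝ) : ℂ) ∈ Metric.closedBall (0:ℂ) (a+1) := by
        rw [Metric.mem_closedBall, dist_zero_right, Complex.norm_real, Real.norm_eq_abs]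
        have : |ε * t| ≤ 1 := by
          rw [abs_mul, _root_.abs_of_nonneg hε0.le]
          calc ε * |t| ≤ ε * K := mul_le_mul_of_nonneg_left htK hε0.le
            _ ≤ 1 := hεK1
        calc |lam + ε*t| ≤ |lam| + |ε*t| := abs_add_le _ _
          _ ≤ a + 1 := add_le_add hlam this
      have hmem2 : ((lam : ℝ) : ℂ) ∈ Metric.closedBall (0:ℂ) (a+1) := by
        rw [Metric.mem_closedBall, dist_zero_right, Complex.norm_real, Real.norm_eq_abs]
        linarith
      have := hδ _ hmem1 _ hmem2 hd1
      rw [dist_eq_norm] at this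
      have hind : Set.indicator ((Set.Icc (-K) K)ᶜ : Set ℝ) p t = 0 :=
        Set.indicator_of_notMem (by simpa using ht) p
      rw [hh_def]
      simp only [hind, mul_zero, add_zero]
      exact mul_le_mul_of_nonneg_right this.le (hp_nonneg t)
    · have hbd : ‖F ((lam + ε*t : ℝ) : ℂ) - F lam‖ ≤ 2*M := by
        calc ‖F ((lam + ε*t : ℝ) : ℂ) - F lam‖
            ≤ ‖F ((lam + ε*t : ℝ) : ℂ)‖ + ‖F ((lam : ℝ) : ℂ)‖ := norm_sub_le _ _
          _ ≤ M + M := add_le_add (hM _) (hM _)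
          _ = 2*M := by ring
      have hind : Set.indicator ((Set.Icc (-K) K)ᶜ : Set ℝ) p t = p t :=
        Set.indicator_of_mem (by simpa using ht) p
      rw [hh_def]
      simp only [hind]
      have h1 : ‖F ((lam + ε*t : ℝ) : ℂ) - F lam‖ * p t ≤ 2*M * p t :=
        mul_le_mul_of_nonneg_right hbd (hp_nonneg t)
      have h2 : 0 ≤ η/6 * p t := by
        have := hp_nonneg t
        positivity
      linarith
  have hIcc_ge : 1 - τ ≤ ∫ t in Set.Icc (-K) K, p t := by
    rw [MeasureTheory.integral_Icc_eq_integral_Ioc,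
      ← intervalIntegral.integral_of_le (by linarith : -K ≤ K), hp_def]
    simp only [intervalIntegral.integral_const_mul, integral_inv_one_add_sq]
    rw [hτ_def]
    linarith
  have hIccc_le : ∫ t in (Set.Icc (-K) K)ᶜ, p t ≤ τ := by
    have := MeasureTheory.integral_add_compl (s := Set.Icc (-K) K)
      measurableSet_Icc hp_int (f := p)
    rw [hp_total] at this
    linarith
  have hterm1 : ‖∫ t in s, (F ((lam + ε*t : ℝ) : ℂ) - F lam) * ((p t:ℝ):ℂ)‖
      ≤ η/6 + 2*M*τ := by
    calc ‖∫ t in s, (F ((lam + ε*t : ℝ) : ℂ) - F lam) * ((p t:ℝ):ℂ)‖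
        ≤ ∫ t in s, ‖(F ((lam + ε*t : ℝ) : ℂ) - F lam) * ((p t:ℝ):ℂ)‖ :=
          norm_integral_le_integral_norm _
      _ ≤ ∫ t in s, h t := by
          apply setIntegral_mono_on (hf := hint1.norm.integrableOn)
            (hg := hh_int.integrableOn) hsm
          intro t _
          exact hptw t
      _ ≤ ∫ t, h t := setIntegral_le_integral hh_int (Eventually.of_forall hh_nonneg)
      _ = η/6 * (∫ t, p t) + 2*M*(∫ t in (Set.Icc (-K) K)ᶜ, p t) := by
          rw [hh_def]
          rw [MeasureTheory.integral_add (hp_int.const_mul _)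
            ((hp_int.indicator hIccm).const_mul _)]
          congr 1
          · exact MeasureTheory.integral_const_mul _ _
          · rw [MeasureTheory.integral_const_mul _ (fun t => Set.indicator ((Set.Icc (-K) K)ᶜ : Set ℝ) p t),
              MeasureTheory.integral_indicator hIccm]
      _ ≤ η/6 + 2*M*τ := by
          rw [hp_total, mul_one]
          exact add_le_add le_rfl (mul_le_mul_of_nonneg_left hIccc_le (by linarith))
  calc ‖(∫ t in s, (F ((lam + ε*t : ℝ) : ℂ) - F lam) * ((p t:ℝ):ℂ))
        - ∫ t in sᶜ, F lam * ((p t:ℝ):ℂ)‖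
      ≤ ‖∫ t in s, (F ((lam + ε*t : ℝ) : ℂ) - F lam) * ((p t:ℝ):ℂ)‖
        + ‖∫ t in sᶜ, F lam * ((p t:ℝ):ℂ)‖ := norm_sub_le _ _
    _ ≤ (η/6 + 2*M*τ) + M*τ := add_le_add hterm1 hterm2
    _ < η := by
        have hMτ : M*τ ≤ M'*δ₁ := by
          apply mul_le_mul (by rw [hM'_def]; linarith) hKτ.le hτ0 hM'0.le
        have hM'δ₁ : M'*δ₁ = η/6 := by
          rw [hδ₁_def]
          field_simp
        have hMτ' : M*τ ≤ η/6 := hM'δ₁ ▸ hMτ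
        have h2 : 2*M*τ = 2*(M*τ) := by ring
        linarith

set_option maxHeartbeats 1000000 in
theorem stmt12 {H : Type*} [NormedAddCommGroup H] [InnerProductSpace ℂ H] [CompleteSpace H]
    (T : H →L[ℂ] H) (hT : IsSelfAdjoint T) (x : H)
    (F : ℂ → ℂ) (hF : Continuous F) (hFb : ∃ M : ℝ, ∀ t : ℝ, ‖F t‖ ≤ M)
    (R : ℝ) (hR : ‖T‖ < R) :
    Tendsto
      (fun ε : ℝ =>
        ∫ u in (-R)..R,
          (F u * (1 / (2 * Real.pi * Complex.I))) •
            ((Ring.inverse (T - ((u : ℂ) + (ε : ℂ) * Complex.I) • (1 : H →L[ℂ] H)) -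
                Ring.inverse (T - ((u : ℂ) - (ε : ℂ) * Complex.I) • (1 : H →L[ℂ] H))) x))
      (𝓝[>] 0) (𝓝 (cfc F T x)) := by
  obtain ⟨M, hM⟩ := hFb
  rcases subsingleton_or_nontrivial H with hsub | hnontriv
  · have hall : ∀ y z : H, y = z := fun y z => Subsingleton.elim y z
    have h1 : (cfc F T x) = 0 := hall _ _
    rw [h1]
    apply Tendsto.congr (f₁ := fun _ => (0:H))
    · intro ε
      exact hall _ _
    · exact tendsto_const_nhds
  have hn : IsStarNormal T := hT.isStarNormal
  have him : ∀ w : ℂ, w ∈ spectrum ℂ T → w.im = 0 := by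
    intro w hw
    have := hT.mem_spectrum_eq_re hw
    rw [this]
    simp
  -- the evaluation CLM
  let L : C(spectrum ℂ T, ℂ) →L[ℂ] H :=
    { toFun := fun f => cfcHom hn (R := ℂ) f x
      map_add' := fun f g => by simp [map_add]
      map_smul' := fun c f => by simp [_root_.map_smul]
      cont := ((ContinuousLinearMap.apply ℂ H x).continuous).comp
        (cfcHom_continuous hn) }
  have hLapp : ∀ f, L f = cfcHom hn (R := ℂ) f x := fun f => rfl
  -- cfc F T x = L Fσ
  have hFσcont : ContinuousOn F (spectrum ℂ T) := hF.continuousOn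
  set Fσ : C(spectrum ℂ T, ℂ) := ⟨(spectrum ℂ T).restrict F, hFσcont.restrict⟩ with hFσ_def
  have hcfcF : cfc F T x = L Fσ := by
    rw [hLapp, cfc_apply F T hn hFσcont]
    rfl
  rw [hcfcF, Metric.tendsto_nhdsWithin_nhds]
  intro η' hη'
  have hL1 : (0:ℝ) < ‖L‖ + 1 := by positivity
  obtain ⟨ε₀, hε₀, hpoisson⟩ := poisson_unif F hF M hM ‖T‖ R (norm_nonneg T) hR
    (η' / (‖L‖ + 1)) (by positivity)
  refine ⟨ε₀, hε₀, ?_⟩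
  intro ε hεmem hεdist
  have hε0 : 0 < ε := hεmem
  have hεne : ε ≠ 0 := ne_of_gt hε0
  have hεlt : ε < ε₀ := by
    rwa [Real.dist_eq, sub_zero, abs_of_pos hε0] at hεdist
  -- the C(σ,ℂ)-valued integrand
  have hφcont_un : Continuous (fun q : ℝ × spectrum ℂ T =>
      (F q.1 * (1 / (2 * (π:ℂ) * I))) *
        (((q.2 : ℂ) - ((q.1:ℂ) + (ε:ℂ)*I))⁻¹ - ((q.2 : ℂ) - ((q.1:ℂ) - (ε:ℂ)*I))⁻¹)) := by
    have hc1 : Continuous (fun q : ℝ × spectrum ℂ T => ((q.2 : ℂ) - ((q.1:ℂ) + (ε:ℂ)*I))) :=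
      (continuous_subtype_val.comp continuous_snd).sub
        ((Complex.continuous_ofReal.comp continuous_fst).add continuous_const)
    have hc2 : Continuous (fun q : ℝ × spectrum ℂ T => ((q.2 : ℂ) - ((q.1:ℂ) - (ε:ℂ)*I))) :=
      (continuous_subtype_val.comp continuous_snd).sub
        ((Complex.continuous_ofReal.comp continuous_fst).sub continuous_const)
    have hne1 : ∀ q : ℝ × spectrum ℂ T, ((q.2 : ℂ) - ((q.1:ℂ) + (ε:ℂ)*I)) ≠ 0 := by
      intro q h
      have := congrArg Complex.im h
      simp [him _ q.2.2] at this
      exact hεne this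
    have hne2 : ∀ q : ℝ × spectrum ℂ T, ((q.2 : ℂ) - ((q.1:ℂ) - (ε:ℂ)*I)) ≠ 0 := by
      intro q h
      have := congrArg Complex.im h
      simp [him _ q.2.2] at this
      exact hεne this
    exact ((hF.comp (Complex.continuous_ofReal.comp continuous_fst)).mul
      continuous_const).mul ((hc1.inv₀ hne1).sub (hc2.inv₀ hne2))
  set φ : ℝ → C(spectrum ℂ T, ℂ) := fun u =>
    ⟨fun w => (F u * (1 / (2 * (π:ℂ) * I))) *
        (((w : ℂ) - ((u:ℂ) + (ε:ℂ)*I))⁻¹ - ((w : ℂ) - ((u:ℂ) - (ε:ℂ)*I))⁻¹),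
      by
        have := hφcont_un.comp (Continuous.prodMk_right u)
        exact this⟩ with hφ_def
  have hφcont : Continuous φ :=
    ContinuousMap.continuous_of_continuous_uncurry _ hφcont_un
  have hφint : IntervalIntegrable φ volume (-R) R := hφcont.intervalIntegrable _ _
  set g : C(spectrum ℂ T, ℂ) := ∫ u in (-R)..R, φ u with hg_def
  -- pointwise identification of the integrand
  have hintegrand : ∀ u : ℝ,
      (F u * (1 / (2 * (π:ℂ) * I))) •
        ((Ring.inverse (T - ((u : ℂ) + (ε : ℂ) * I) • (1 : H →L[ℂ] H)) -
            Ring.inverse (T - ((u : ℂ) - (ε : ℂ) * I) • (1 : H →L[ℂ] H))) x)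
      = L (φ u) := by
    intro u
    have hz1 : ((u:ℂ) + (ε:ℂ)*I).im ≠ 0 := by simpa using hεne
    have hz2 : ((u:ℂ) - (ε:ℂ)*I).im ≠ 0 := by
      simp only [Complex.sub_im, Complex.ofReal_im, Complex.mul_im, Complex.ofReal_re,
        Complex.I_im, Complex.I_re, mul_zero, mul_one, zero_sub, zero_add, neg_neg,
        Complex.ofReal_im]
      simpa using hεne
    have h1 := res_cfc T hT ((u:ℂ) + (ε:ℂ)*I) hz1
    have h2 := res_cfc T hT ((u:ℂ) - (ε:ℂ)*I) hz2
    have hne1 : ∀ w ∈ spectrum ℂ T, w - ((u:ℂ) + (ε:ℂ)*I) ≠ 0 := by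
      intro w hw h
      have := congrArg Complex.im h
      simp [him _ hw] at this
      exact hεne this
    have hne2 : ∀ w ∈ spectrum ℂ T, w - ((u:ℂ) - (ε:ℂ)*I) ≠ 0 := by
      intro w hw h
      have := congrArg Complex.im h
      simp [him _ hw] at this
      exact hεne this
    have hcont1 : ContinuousOn (fun w : ℂ => (w - ((u:ℂ) + (ε:ℂ)*I))⁻¹) (spectrum ℂ T) :=
      (continuousOn_id.sub continuousOn_const).inv₀ (by simpa using hne1)
    have hcont2 : ContinuousOn (fun w : ℂ => (w - ((u:ℂ) - (ε:ℂ)*I))⁻¹) (spectrum ℂ T) :=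
      (continuousOn_id.sub continuousOn_const).inv₀ (by simpa using hne2)
    rw [h1, h2]
    have hsub : cfc (fun w : ℂ => (w - ((u:ℂ) + (ε:ℂ)*I))⁻¹) T
        - cfc (fun w : ℂ => (w - ((u:ℂ) - (ε:ℂ)*I))⁻¹) T
        = cfc (fun w : ℂ => (w - ((u:ℂ) + (ε:ℂ)*I))⁻¹ - (w - ((u:ℂ) - (ε:ℂ)*I))⁻¹) T :=
      (cfc_sub _ _ T hcont1 hcont2).symm
    rw [hsub]
    have hmul : (F u * (1 / (2 * (π:ℂ) * I))) • cfc
        (fun w : ℂ => (w - ((u:ℂ) + (ε:ℂ)*I))⁻¹ - (w - ((u:ℂ) - (ε:ℂ)*I))⁻¹) T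
        = cfc (fun w : ℂ => (F u * (1 / (2 * (π:ℂ) * I))) *
            ((w - ((u:ℂ) + (ε:ℂ)*I))⁻¹ - (w - ((u:ℂ) - (ε:ℂ)*I))⁻¹)) T :=
      (cfc_const_mul _ _ T (hcont1.sub hcont2)).symm
    rw [← ContinuousLinearMap.smul_apply, hmul,
      cfc_apply (fun w : ℂ => (F u * (1 / (2 * (π:ℂ) * I))) *
            ((w - ((u:ℂ) + (ε:ℂ)*I))⁻¹ - (w - ((u:ℂ) - (ε:ℂ)*I))⁻¹)) T hn (continuousOn_const.mul (hcont1.sub hcont2))]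
    rfl
  have hswap : (∫ u in (-R)..R,
      (F u * (1 / (2 * (π:ℂ) * I))) •
        ((Ring.inverse (T - ((u : ℂ) + (ε : ℂ) * I) • (1 : H →L[ℂ] H)) -
            Ring.inverse (T - ((u : ℂ) - (ε : ℂ) * I) • (1 : H →L[ℂ] H))) x))
      = L g := by
    rw [hg_def, ← L.intervalIntegral_comp_comm hφint]
    apply intervalIntegral.integral_congr
    intro u _
    exact hintegrand u
  rw [show (2 * Real.pi * Complex.I : ℂ) = (2 * (π:ℂ) * I) by norm_num] at hswap ⊢
  rw [hswap]
  -- now estimate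
  have hgF : dist g Fσ < η' / (‖L‖ + 1) := by
    rw [ContinuousMap.dist_lt_iff (by positivity)]
    intro w
    have hwim := him _ w.2
    set lam : ℝ := (w : ℂ).re with hlam_def
    have hwre : (w : ℂ) = ((lam : ℝ) : ℂ) := by
      rw [hlam_def]
      exact (Complex.re_add_im _).symm.trans (by rw [hwim]; simp)
    have hlamle : |lam| ≤ ‖T‖ := by
      calc |lam| ≤ ‖(w : ℂ)‖ := Complex.abs_re_le_norm _
        _ ≤ ‖T‖ := spectrum.norm_le_norm_of_mem w.2
    have hgw : g w = ∫ u in (-R)..R, F u * ((ε / (π * ((lam-u)^2 + ε^2)) : ℝ) : ℂ) := by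
      have heval := (ContinuousMap.evalCLM ℂ w).intervalIntegral_comp_comm hφint
      calc g w = (ContinuousMap.evalCLM ℂ w) g := rfl
        _ = ∫ u in (-R)..R, (ContinuousMap.evalCLM ℂ w) (φ u) := by
            rw [hg_def, heval]
        _ = ∫ u in (-R)..R, F u * ((ε / (π * ((lam-u)^2 + ε^2)) : ℝ) : ℂ) := by
            apply intervalIntegral.integral_congr
            intro u _
            show (φ u) w = _
            rw [hφ_def]
            simp only [ContinuousMap.coe_mk]
            rw [hwre, mul_assoc, ker_id lam u ε hεne]
    rw [dist_eq_norm, hgw]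
    have : Fσ w = F ((lam : ℝ) : ℂ) := by rw [hFσ_def]; simp [Set.restrict]; rw [hwre]
    rw [this]
    exact hpoisson ε hε0 hεlt lam hlamle
  calc dist (L g) (L Fσ) ≤ ‖L‖ * dist g Fσ := by
        rw [dist_eq_norm, dist_eq_norm, ← map_sub]
        exact L.le_opNorm _
    _ < η' := by
        have h1 : ‖L‖ * dist g Fσ ≤ ‖L‖ * (η' / (‖L‖ + 1)) := by
          by_cases hd : dist g Fσ ≤ η' / (‖L‖ + 1)
          · exact mul_le_mul_of_nonneg_left hd (norm_nonneg L)
          · exact absurd hgF (by linarith)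
        have h2 : ‖L‖ * (η' / (‖L‖ + 1)) < η' := by
          rw [mul_div_assoc']
          rw [div_lt_iff₀ hL1]
          nlinarith [norm_nonneg L]
        linarith
end
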